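/- arXiv:2004.09885 — 2 statements merged into one kernel-verified Lean document; each statement's English description precedes it below -/
import Mathlib

section
/- Let P be a hereditary graph class, let G be a finite graph on n vertices, and let W ⊆ V(G). Then (i) every maximal connected P set of G contains at most n maximal connected P sets of the induced subgraph G[W]; and consequently (ii) the number of maximal connected P sets of G[W] is at most n times the number of maximal connected P sets of G. -/
attribute [local instance] Classical.propDecidable

/-- A *graph class*: a collection of finite simple graphs, given as a property of
simple graphs over every finite vertex type. -/
abbrev GraphClass : Type 1 :=
  ∀ (V : Type) [Fintype V], SimpleGraph V → Prop

/-- The graph class is a nonempty collection of graphs. -/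
def GraphClass.NonemptyClass (P : GraphClass) : Prop :=
  ∃ (V : Type) (_ : Fintype V) (G : SimpleGraph V), P V G

/-- The graph class is closed under isomorphism. -/
def GraphClass.IsoClosed (P : GraphClass) : Prop :=
  ∀ (V W : Type) (_ : Fintype V) (_ : Fintype W) (G : SimpleGraph V) (H : SimpleGraph W),
    _root_.Nonempty (G ≃g H) → (P V G ↔ P W H)

/-- The graph class is hereditary: it is closed under taking induced subgraphs. -/
def GraphClass.Hereditary (P : GraphClass) : Prop :=
  ∀ (V : Type) (_ : Fintype V) (G : SimpleGraph V) (S : Set V),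
    P V G → P (↥S) (G.induce S)

variable {V : Type} [Fintype V]

/-- `S ⊆ V(G)` is a `P` set of `G` if the induced subgraph `G[S]` belongs to `P`. -/
def IsPSet (P : GraphClass) (G : SimpleGraph V) (S : Set V) : Prop :=
  P (↥S) (G.induce S)

/-- `S` is a maximal `P` set of `G`: a `P` set with no proper superset that is a `P` set. -/
def IsMaxPSet (P : GraphClass) (G : SimpleGraph V) (S : Set V) : Prop :=
  IsPSet P G S ∧ ∀ T : Set V, S ⊂ T → ¬ IsPSet P G T

/-- `S` is a connected `P` set of `G`: a `P` set inducing a connected subgraph. -/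
def IsConnPSet (P : GraphClass) (G : SimpleGraph V) (S : Set V) : Prop :=
  IsPSet P G S ∧ (G.induce S).Connected

/-- `S` is a maximal connected `P` set of `G`: a connected `P` set contained in no
strictly larger connected `P` set. -/
def IsMaxConnPSet (P : GraphClass) (G : SimpleGraph V) (S : Set V) : Prop :=
  IsConnPSet P G S ∧ ∀ T : Set V, S ⊂ T → ¬ IsConnPSet P G T

/-- A forbidden set of `G` (with respect to the class `P`): an inclusion-minimal vertex
set inducing a subgraph that is not in `P`. -/
def IsForbiddenSet (P : GraphClass) (G : SimpleGraph V) (X : Set V) : Prop :=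
  ¬ IsPSet P G X ∧ ∀ Y : Set V, Y ⊂ X → IsPSet P G Y

/-! Two maximal connected `P` sets of `G[W]` that lie in a common `P` set `S` of `G` are either
equal or disjoint: if they meet, their union is connected, and it is a `P` set because it lies in
`S` and `P` is hereditary. Hence `S` contains at most `n` of them. Every maximal connected `P` set
of `G[W]` lies in some maximal connected `P` set of `G`, and summing over these gives the bound
`n · #{maximal connected P sets of G}`. -/

namespace SimpleGraph

noncomputable def induceInduceIso (G : SimpleGraph V) (W : Set V) (T : Set W) :
    (G.induce W).induce T ≃g G.induce (Subtype.val '' T) where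
  toEquiv := Equiv.Set.image Subtype.val T Subtype.val_injective
  map_rel_iff' := Iff.rfl

end SimpleGraph

theorem Set.ncard_le_card_of_pairwiseDisjoint {α : Type*} [Finite α] {𝒯 : Set (Set α)}
    (hd : 𝒯.PairwiseDisjoint id) (hne : ∀ T ∈ 𝒯, T.Nonempty) : 𝒯.ncard ≤ Nat.card α := by
  rw [← Nat.card_coe_set_eq]
  refine Nat.card_le_card_of_injective (fun T : 𝒯 => (hne T T.2).some) fun T T' h => ?_
  have h' : (hne T T.2).some = (hne T' T'.2).some := h
  by_contra hTT'
  exact Set.disjoint_left.mp (hd T.2 T'.2 (Subtype.coe_ne_coe.mpr hTT')) (hne T T.2).some_mem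
    (h' ▸ (hne T' T'.2).some_mem)

theorem Set.ncard_le_mul_of_subset_biUnion {α ι : Type*} [Finite α] {t : Set ι} (ht : t.Finite)
    {s : Set α} {f : ι → Set α} (hs : s ⊆ ⋃ i ∈ t, f i) {n : ℕ} (hf : ∀ i ∈ t, (f i).ncard ≤ n) :
    s.ncard ≤ t.ncard * n := by
  classical
  lift t to Finset ι using ht
  have hcover : s ⊆ ↑(t.biUnion fun i => (f i).toFinite.toFinset) := by simpa using hs
  calc s.ncard ≤ (t.biUnion fun i => (f i).toFinite.toFinset).card :=
        (Set.ncard_le_ncard hcover).trans_eq (Set.ncard_coe_finset _)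
    _ ≤ t.card * n := Finset.card_biUnion_le_card_mul _ _ _ fun i hi => by
        simpa [Set.ncard_eq_toFinset_card _ (f i).toFinite] using hf i hi
    _ = (t : Set ι).ncard * n := by rw [Set.ncard_coe_finset]

variable {P : GraphClass}

theorem isMaxConnPSet_iff_maximal {G : SimpleGraph V} {S : Set V} :
    IsMaxConnPSet P G S ↔ Maximal (IsConnPSet P G) S :=
  Set.maximal_iff_forall_ssuperset.symm

theorem isPSet_induce_iff (hiso : P.IsoClosed) {G : SimpleGraph V} {W : Set V} {T : Set W} :
    IsPSet P (G.induce W) T ↔ IsPSet P G (Subtype.val '' T) :=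
  hiso _ _ _ _ _ _ ⟨G.induceInduceIso W T⟩

theorem isConnPSet_induce_iff (hiso : P.IsoClosed) {G : SimpleGraph V} {W : Set V} {T : Set W} :
    IsConnPSet P (G.induce W) T ↔ IsConnPSet P G (Subtype.val '' T) :=
  and_congr (isPSet_induce_iff hiso) (G.induceInduceIso W T).connected_iff

theorem IsPSet.subset (hiso : P.IsoClosed) (hher : P.Hereditary) {G : SimpleGraph V}
    {S A : Set V} (hS : IsPSet P G S) (hAS : A ⊆ S) : IsPSet P G A := by
  have h : IsPSet P (G.induce S) (Subtype.val ⁻¹' A) := hher _ _ _ _ hS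
  rwa [isPSet_induce_iff hiso, Subtype.image_preimage_coe, Set.inter_eq_right.mpr hAS] at h

theorem IsConnPSet.exists_isMaxConnPSet_superset {G : SimpleGraph V} {A : Set V}
    (hA : IsConnPSet P G A) : ∃ S, A ⊆ S ∧ IsMaxConnPSet P G S := by
  simpa only [isMaxConnPSet_iff_maximal] using Finite.exists_le_maximal hA

theorem IsConnPSet.nonempty {G : SimpleGraph V} {A : Set V} (hA : IsConnPSet P G A) :
    A.Nonempty :=
  let ⟨⟨a, ha⟩⟩ := hA.2.nonempty
  ⟨a, ha⟩

theorem IsMaxConnPSet.eq_of_isPSet_union {G : SimpleGraph V} {T T' : Set V}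
    (hT : IsMaxConnPSet P G T) (hT' : IsMaxConnPSet P G T') (hU : IsPSet P G (T ∪ T'))
    (hTT' : (T ∩ T').Nonempty) : T = T' := by
  rw [isMaxConnPSet_iff_maximal] at hT hT'
  have hconn : IsConnPSet P G (T ∪ T') :=
    ⟨hU, SimpleGraph.induce_union_connected hT.prop.2.preconnected hT'.prop.2.preconnected hTT'⟩
  exact (hT.eq_of_subset hconn Set.subset_union_left).trans
    (hT'.eq_of_subset hconn Set.subset_union_right).symm

theorem pairwiseDisjoint_maxConnPSets_induce_subset (hiso : P.IsoClosed) (hher : P.Hereditary)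
    {G : SimpleGraph V} {W S : Set V} (hS : IsPSet P G S) :
    {T : Set W | IsMaxConnPSet P (G.induce W) T ∧ Subtype.val '' T ⊆ S}.PairwiseDisjoint id := by
  intro T hT T' hT' hTT'
  by_contra hmeet
  refine hTT' (hT.1.eq_of_isPSet_union hT'.1 ?_ (Set.not_disjoint_iff_nonempty_inter.mp hmeet))
  rw [isPSet_induce_iff hiso, Set.image_union]
  exact hS.subset hiso hher (Set.union_subset hT.2 hT'.2)

theorem ncard_maxConnPSets_induce_subset_le (hiso : P.IsoClosed) (hher : P.Hereditary)
    {G : SimpleGraph V} {W S : Set V} (hS : IsPSet P G S) :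
    {T : Set W | IsMaxConnPSet P (G.induce W) T ∧ Subtype.val '' T ⊆ S}.ncard ≤
      Fintype.card V :=
  calc _ ≤ Nat.card W := Set.ncard_le_card_of_pairwiseDisjoint
        (pairwiseDisjoint_maxConnPSets_induce_subset hiso hher hS) fun _ hT => hT.1.1.nonempty
    _ ≤ Nat.card V := Finite.card_subtype_le _
    _ = Fintype.card V := Nat.card_eq_fintype_card

theorem IsMaxConnPSet.exists_isMaxConnPSet_image_subset (hiso : P.IsoClosed)
    {G : SimpleGraph V} {W : Set V} {T : Set W} (hT : IsMaxConnPSet P (G.induce W) T) :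
    ∃ S, IsMaxConnPSet P G S ∧ Subtype.val '' T ⊆ S :=
  let ⟨S, hTS, hS⟩ := ((isConnPSet_induce_iff hiso).mp hT.1).exists_isMaxConnPSet_superset
  ⟨S, hS, hTS⟩

theorem maxConnPSets_of_induced_subgraph_general
    (P : GraphClass) (hiso : P.IsoClosed) (hher : P.Hereditary)
    {V : Type} [Fintype V] (G : SimpleGraph V) (W : Set V) :
    (∀ S : Set V, IsMaxConnPSet P G S →
      {T : Set (↥W) | IsMaxConnPSet P (G.induce W) T ∧ Subtype.val '' T ⊆ S}.ncard ≤
        Fintype.card V) ∧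
    {T : Set (↥W) | IsMaxConnPSet P (G.induce W) T}.ncard ≤
      Fintype.card V * {S : Set V | IsMaxConnPSet P G S}.ncard := by
  refine ⟨fun S hS => ncard_maxConnPSets_induce_subset_le hiso hher hS.1.1, ?_⟩
  calc _ ≤ {S : Set V | IsMaxConnPSet P G S}.ncard * Fintype.card V :=
        Set.ncard_le_mul_of_subset_biUnion (Set.toFinite _)
          (fun T hT => by
            obtain ⟨S, hS, hTS⟩ := hT.exists_isMaxConnPSet_image_subset hiso
            exact Set.mem_biUnion hS ⟨hT, hTS⟩)
          fun S hS => ncard_maxConnPSets_induce_subset_le hiso hher hS.1.1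
    _ = _ := Nat.mul_comm _ _

/-- Let `P` be a hereditary graph class, `G` a finite graph on `n`
vertices and `W ⊆ V(G)`.  (i) every maximal connected `P` set of `G` contains at most
`n` maximal connected `P` sets of `G[W]`, and (ii) the number of maximal connected `P`
sets of `G[W]` is at most `n` times the number of maximal connected `P` sets of `G`. -/
theorem maxConnPSets_of_induced_subgraph
    (P : GraphClass) (hne : P.NonemptyClass) (hiso : P.IsoClosed) (hher : P.Hereditary)
    {V : Type} [Fintype V] (G : SimpleGraph V) (W : Set V) :
    (∀ S : Set V, IsMaxConnPSet P G S →
      {T : Set (↥W) | IsMaxConnPSet P (G.induce W) T ∧ Subtype.val '' T ⊆ S}.ncard ≤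
        Fintype.card V) ∧
    {T : Set (↥W) | IsMaxConnPSet P (G.induce W) T}.ncard ≤
      Fintype.card V * {S : Set V | IsMaxConnPSet P G S}.ncard :=
  maxConnPSets_of_induced_subgraph_general P hiso hher G W
end

section
/- Let P be a hereditary graph class, let G be a finite graph that does not belong to P, and let Z be a set of at least two vertices of G such that every forbidden set X of G contains Z and the induced subgraph G[X] is biconnected. Then for every maximal P set S of G with Z ⊆ S, all vertices of Z lie in the same connected component of G[S]. -/
attribute [local instance] Classical.propDecidable

variable {V : Type} [Fintype V]

/-- A finite graph is biconnected if it is connected and remains connected after the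
deletion of any single vertex. -/
def IsBiconnected {W : Type} (H : SimpleGraph W) : Prop :=
  H.Connected ∧ ∀ w : W, (H.induce {x | x ≠ w}).Connected

/-!
Let `S` be a maximal `P` set with `Z ⊆ S`. Since `G ∉ P`, some vertex `v` lies outside `S`, and
by maximality `S ∪ {v}` is not a `P` set, so it contains a forbidden set `X`. As `P` is
hereditary, `X ⊄ S`, i.e. `v ∈ X`. By hypothesis `Z ⊆ X` and `G[X] - v` is connected; since
`X \ {v} ⊆ S`, any two vertices of `Z` are joined by a path inside `G[S]`.
-/

lemma SimpleGraph.reachable_induce_of_connected_induce_ne {α : Type*} {G : SimpleGraph α}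
    {S X : Set α} {v : α} (hXS : X ⊆ insert v S) (hv : v ∉ S) (hvX : v ∈ X)
    (hconn : ((G.induce X).induce {x | x ≠ ⟨v, hvX⟩}).Connected)
    {z z' : α} (hzX : z ∈ X) (hz'X : z' ∈ X) (hzS : z ∈ S) (hz'S : z' ∈ S) :
    (G.induce S).Reachable ⟨z, hzS⟩ ⟨z', hz'S⟩ := by
  have hmaps : Set.MapsTo (Embedding.induce (G := G) X).toHom {x | x ≠ ⟨v, hvX⟩} S :=
    fun x hx => (hXS x.2).resolve_left fun h => hx (Subtype.ext h)
  have hne : ∀ {y} (hy : y ∈ S) (hyX : y ∈ X), (⟨y, hyX⟩ : X) ≠ ⟨v, hvX⟩ :=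
    fun hy _ h => hv (Subtype.mk.inj h ▸ hy)
  exact (hconn.preconnected ⟨⟨z, hzX⟩, hne hzS hzX⟩ ⟨⟨z', hz'X⟩, hne hz'S hz'X⟩).map
    (induceHom (Embedding.induce (G := G) X).toHom hmaps)

section PSet

variable {P : GraphClass} {G : SimpleGraph V}

lemma IsPSet.mono (hiso : P.IsoClosed) (hher : P.Hereditary) {X T : Set V} (hXT : X ⊆ T)
    (hT : IsPSet P G T) : IsPSet P G X := by
  let e : (G.induce T).induce {x : T | ↑x ∈ X} ≃g G.induce X :=
    { toFun := fun a => ⟨a.1.1, a.2⟩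
      invFun := fun a => ⟨⟨a, hXT a.2⟩, a.2⟩
      map_rel_iff' := Iff.rfl }
  exact (hiso _ _ _ _ _ _ ⟨e⟩).mp (hher _ _ _ _ hT)

lemma IsPSet.exists_notMem (hiso : P.IsoClosed) (hGP : ¬ P V G) {S : Set V}
    (hS : IsPSet P G S) : ∃ v, v ∉ S := by
  refine (Set.ne_univ_iff_exists_notMem S).mp fun hSuniv => hGP ?_
  exact (hiso _ _ _ _ _ _ ⟨G.induceUnivIso⟩).mp (hSuniv ▸ hS)

lemma exists_isForbiddenSet_subset {T : Set V} (hT : ¬ IsPSet P G T) :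
    ∃ X ⊆ T, IsForbiddenSet P G X := by
  obtain ⟨X, hXT, hX⟩ := exists_minimal_le_of_wellFoundedLT (¬ IsPSet P G ·) T hT
  exact ⟨X, hXT, hX.prop, fun Y hYX => not_not.mp (hX.not_prop_of_lt hYX)⟩

lemma IsMaxPSet.exists_isForbiddenSet_mem (hiso : P.IsoClosed) (hher : P.Hereditary)
    {S : Set V} (hS : IsMaxPSet P G S) {v : V} (hv : v ∉ S) :
    ∃ X ⊆ insert v S, v ∈ X ∧ IsForbiddenSet P G X := by
  obtain ⟨X, hXS, hX⟩ := exists_isForbiddenSet_subset (hS.2 _ (Set.ssubset_insert hv))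
  refine ⟨X, hXS, by_contra fun hvX => hX.1 (hS.1.mono hiso hher fun x hx => ?_), hX⟩
  exact (hXS hx).resolve_left (ne_of_mem_of_not_mem hx hvX)

end PSet

theorem Z_in_one_component_of_maxPSet_general
    (P : GraphClass) (hiso : P.IsoClosed) (hher : P.Hereditary)
    {V : Type} [Fintype V] (G : SimpleGraph V) (hGP : ¬ P V G)
    (Z : Set V)
    (hforb : ∀ X : Set V, IsForbiddenSet P G X → Z ⊆ X ∧ IsBiconnected (G.induce X)) :
    ∀ S : Set V, IsMaxPSet P G S → ∀ hZS : Z ⊆ S,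
      ∀ (z z' : V) (hz : z ∈ Z) (hz' : z' ∈ Z),
        (G.induce S).Reachable ⟨z, hZS hz⟩ ⟨z', hZS hz'⟩ := by
  intro S hS hZS z z' hz hz'
  obtain ⟨v, hv⟩ := hS.1.exists_notMem hiso hGP
  obtain ⟨X, hXS, hvX, hX⟩ := hS.exists_isForbiddenSet_mem hiso hher hv
  obtain ⟨hZX, -, hdelete⟩ := hforb X hX
  exact SimpleGraph.reachable_induce_of_connected_induce_ne hXS hv hvX (hdelete ⟨v, hvX⟩)
    (hZX hz) (hZX hz') _ _

/-- Let `P` be a hereditary graph class, `G ∉ P` a finite graph, and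
`Z` a set of at least two vertices of `G` such that every forbidden set `X` of `G`
contains `Z` and induces a biconnected subgraph.  Then in every maximal `P` set `S` of
`G` with `Z ⊆ S`, all vertices of `Z` lie in the same connected component of `G[S]`. -/
theorem Z_in_one_component_of_maxPSet
    (P : GraphClass) (hne : P.NonemptyClass) (hiso : P.IsoClosed) (hher : P.Hereditary)
    {V : Type} [Fintype V] (G : SimpleGraph V) (hGP : ¬ P V G)
    (Z : Set V) (hZ2 : 2 ≤ Z.ncard)
    (hforb : ∀ X : Set V, IsForbiddenSet P G X → Z ⊆ X ∧ IsBiconnected (G.induce X)) :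
    ∀ S : Set V, IsMaxPSet P G S → ∀ hZS : Z ⊆ S,
      ∀ (z z' : V) (hz : z ∈ Z) (hz' : z' ∈ Z),
        (G.induce S).Reachable ⟨z, hZS hz⟩ ⟨z', hZS hz'⟩ :=
  Z_in_one_component_of_maxPSet_general P hiso hher G hGP Z hforb
end
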